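/- Let r₁, r₂, α > 0 and work in three-dimensional Euclidean space. The inversion with respect to the sphere of centre (0,0,√(r₂² + α²)) and radius r₂ maps the point (0,0,−α) to (0,0,α), and the inversion with respect to the sphere of centre (0,0,−√(r₁² + α²)) and radius r₁ maps (0,0,α) to (0,0,−α). Consequently, (0,0,−α) is a fixed point of the composition of these two inversions. -/
import Mathlib
open EuclideanGeometry

/-- The point (0, 0, z) in three-dimensional Euclidean space. -/
noncomputable def pt (z : ℝ) : EuclideanSpace ℝ (Fin 3) :=
  (WithLp.equiv 2 (Fin 3 → ℝ)).symm ![0, 0, z]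

lemma pt_sub (a b : ℝ) : pt a - pt b = pt (a - b) := by
  simp [pt]; ext i; fin_cases i <;> simp

lemma pt_add (a b : ℝ) : pt a + pt b = pt (a + b) := by
  simp [pt]; ext i; fin_cases i <;> simp

lemma pt_smul (t a : ℝ) : t • pt a = pt (t * a) := by
  simp [pt]; ext i; fin_cases i <;> simp

lemma dist_pt (a b : ℝ) : dist (pt a) (pt b) = |a - b| := by
  rw [EuclideanSpace.dist_eq]
  simp [pt, Fin.sum_univ_three, Real.dist_eq]
  exact Real.sqrt_sq_eq_abs _

lemma inv_pt (c r x : ℝ) (h : x ≠ c) :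
    inversion (pt c) r (pt x) = pt (c + r^2 / (x - c)) := by
  have hxc : x - c ≠ 0 := sub_ne_zero.mpr h
  have key : (r / |x - c|)^2 * (x - c) + c = c + r^2 / (x - c) := by
    rw [div_pow, sq_abs]; field_simp; ring
  rw [inversion]
  rw [show (pt x -ᵥ pt c : EuclideanSpace ℝ (Fin 3)) = pt x - pt c from rfl,
    pt_sub, dist_pt, pt_smul]
  rw [show ∀ y : EuclideanSpace ℝ (Fin 3), y +ᵥ pt c = y + pt c from fun _ => rfl,
    pt_add, key]

theorem inversion_fixed_points (r₁ r₂ α : ℝ) (hr₁ : 0 < r₁) (hr₂ : 0 < r₂)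
    (hα : 0 < α) :
    inversion (pt (Real.sqrt (r₂ ^ 2 + α ^ 2))) r₂ (pt (-α)) = pt α ∧
    inversion (pt (-Real.sqrt (r₁ ^ 2 + α ^ 2))) r₁ (pt α) = pt (-α) ∧
    (inversion (pt (-Real.sqrt (r₁ ^ 2 + α ^ 2))) r₁ ∘
      inversion (pt (Real.sqrt (r₂ ^ 2 + α ^ 2))) r₂) (pt (-α)) = pt (-α) := by
  set s₁ := Real.sqrt (r₁ ^ 2 + α ^ 2) with hs₁
  set s₂ := Real.sqrt (r₂ ^ 2 + α ^ 2) with hs₂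
  have hs₁sq : s₁ ^ 2 = r₁ ^ 2 + α ^ 2 := Real.sq_sqrt (by positivity)
  have hs₂sq : s₂ ^ 2 = r₂ ^ 2 + α ^ 2 := Real.sq_sqrt (by positivity)
  have hs₁pos : 0 < s₁ := Real.sqrt_pos.mpr (by positivity)
  have hs₂pos : 0 < s₂ := Real.sqrt_pos.mpr (by positivity)
  have h1 : inversion (pt s₂) r₂ (pt (-α)) = pt α := by
    rw [inv_pt _ _ _ (by nlinarith)]
    have hne : -α - s₂ ≠ 0 := by nlinarith
    rw [show s₂ + r₂^2 / (-α - s₂) = α by field_simp; nlinarith]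
  have h2 : inversion (pt (-s₁)) r₁ (pt α) = pt (-α) := by
    rw [inv_pt _ _ _ (by nlinarith)]
    have hne : α - -s₁ ≠ 0 := by nlinarith
    rw [show -s₁ + r₁^2 / (α - -s₁) = -α by field_simp; nlinarith]
  exact ⟨h1, h2, by simp [Function.comp, h1, h2]⟩
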